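/- arXiv:1510.03309 — 4 statements merged into one kernel-verified Lean document; each statement's English description precedes it below -/
import Mathlib

section
/- There exists an absolute constant c > 0 such that for every natural number N₀ there exists a finite subset A of the real numbers with |A| ≥ N₀ having the property that for every decomposition of A into disjoint subsets B and C with A = B ∪ C, one has max{E₊(B), E×(C)} ≥ c·|A|^(7/3). -/
/-!
Take `A = {i (M+1)^j : 1 ≤ i ≤ M, 1 ≤ j ≤ K}` with `M = K²`, so `|A| = K³`. Its `K` rows are
dilated intervals, so they have small sumsets, while `A` itself has the small product set
`|AA| ≤ 2K⁵`. If `B` holds half of `A`, Cauchy–Schwarz on each row and Hölder over the rows give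
`E₊(B) ≥ |B|⁴ / (2K⁵)`; otherwise `C` holds half of `A` and `E×(C) ≥ |C|⁴ / |AA|`. Either way the
energy is at least `K¹² / (32 K⁵) = |A|^{7/3} / 32`.
-/

open Finset Function Combinatorics.Additive Pointwise

section Energy

variable {ι α : Type*} [DecidableEq α]

lemma sum_addEnergy_le_addEnergy_biUnion [Add α] (s : Finset ι) {f : ι → Finset α}
    (hf : (s : Set ι).PairwiseDisjoint f) : ∑ i ∈ s, E[f i] ≤ E[s.biUnion f] := by
  let quads (t : Finset α) : Finset ((α × α) × α × α) :=
    {x ∈ (t ×ˢ t) ×ˢ t ×ˢ t | x.1.1 + x.2.1 = x.1.2 + x.2.2}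
  have hquads : (s : Set ι).PairwiseDisjoint (quads ∘ f) := by
    intro i hi j hj hij
    refine disjoint_left.2 fun x hxi hxj => ?_
    simp only [comp_apply, quads, mem_filter, mem_product] at hxi hxj
    exact disjoint_left.1 (hf hi hj hij) hxi.1.1.1 hxj.1.1.1
  calc ∑ i ∈ s, E[f i] = #(s.biUnion (quads ∘ f)) := (card_biUnion hquads).symm
    _ ≤ E[s.biUnion f] := card_le_card <| biUnion_subset.2 fun i hi => by
      have h := subset_biUnion_of_mem f hi
      exact filter_subset_filter _ <|
        product_subset_product (product_subset_product h h) (product_subset_product h h)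

/-- Cauchy–Schwarz inside each piece `R i`, then Hölder across the `#s` pieces. -/
lemma card_pow_four_le_mul_addEnergy_of_subset_biUnion [Add α] {s : Finset ι}
    {R : ι → Finset α} {B : Finset α} {L : ℕ} (hR : (s : Set ι).PairwiseDisjoint R)
    (hB : B ⊆ s.biUnion R) (hL : ∀ i ∈ s, #(R i + R i) ≤ L) :
    #B ^ 4 ≤ #s ^ 3 * L * E[B] := by
  set b : ι → Finset α := fun i => B ∩ R i
  have hb : s.biUnion b = B := by
    rw [← inter_biUnion]; exact inter_eq_left.2 hB
  have hbdisj : (s : Set ι).PairwiseDisjoint b :=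
    hR.mono fun _ => inter_subset_right
  have hpiece : ∀ i ∈ s, #(b i) ^ 4 ≤ L * E[b i] := fun i hi =>
    calc #(b i) ^ 4 = #(b i) ^ 2 * #(b i) ^ 2 := by ring
      _ ≤ #(b i + b i) * E[b i] := le_card_add_mul_addEnergy _ _
      _ ≤ L * E[b i] := by
        gcongr
        exact (card_le_card (add_subset_add inter_subset_right inter_subset_right)).trans
          (hL i hi)
  calc #B ^ 4 = (∑ i ∈ s, #(b i)) ^ (3 + 1) := by rw [← card_biUnion hbdisj, hb]
    _ ≤ #s ^ 3 * ∑ i ∈ s, #(b i) ^ 4 :=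
        pow_sum_le_card_mul_sum_pow (fun _ _ => Nat.zero_le _) 3
    _ ≤ #s ^ 3 * ∑ i ∈ s, L * E[b i] := by gcongr with i hi; exact hpiece i hi
    _ = #s ^ 3 * L * ∑ i ∈ s, E[b i] := by rw [← mul_sum, mul_assoc]
    _ ≤ #s ^ 3 * L * E[B] := by
      gcongr
      rw [← hb]
      exact sum_addEnergy_le_addEnergy_biUnion s hbdisj

lemma card_pow_four_le_card_mul_mul_mulEnergy_of_subset [Mul α] {A C : Finset α}
    (hC : C ⊆ A) : #C ^ 4 ≤ #(A * A) * Eₘ[C] :=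
  calc #C ^ 4 = #C ^ 2 * #C ^ 2 := by ring
    _ ≤ #(C * C) * Eₘ[C] := le_card_mul_mul_mulEnergy _ _
    _ ≤ #(A * A) * Eₘ[C] := by gcongr

end Energy

section OrderedSemiring

variable {R : Type*} [Semiring R] [LinearOrder R] [IsStrictOrderedRing R]

variable {b x y : R} {j k : ℕ}

lemma mul_pow_lt_mul_pow (hb : 1 ≤ b) (hxb : x < b) (hy : 1 ≤ y) (hjk : j < k) :
    x * b ^ j < y * b ^ k := by
  calc x * b ^ j < b * b ^ j := by gcongr
    _ = b ^ (j + 1) := (pow_succ' b j).symm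
    _ ≤ b ^ k := pow_le_pow_right₀ hb hjk
    _ ≤ y * b ^ k := le_mul_of_one_le_left (by positivity) hy

lemma eq_of_mul_pow_eq_mul_pow (hb : 1 ≤ b) (hx : 1 ≤ x) (hxb : x < b) (hy : 1 ≤ y)
    (hyb : y < b) (h : x * b ^ j = y * b ^ k) : j = k :=
  le_antisymm (not_lt.1 fun hkj => (mul_pow_lt_mul_pow hb hyb hx hkj).ne' h)
    (not_lt.1 fun hjk => (mul_pow_lt_mul_pow hb hxb hy hjk).ne h)

end OrderedSemiring

noncomputable def geomRow (M j : ℕ) : Finset ℝ :=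
  (Icc 1 M).image fun i : ℕ => (i : ℝ) * (M + 1) ^ j

noncomputable def geomGrid (M K : ℕ) : Finset ℝ := (Icc 1 K).biUnion (geomRow M)

lemma mem_geomRow {M j : ℕ} {x : ℝ} :
    x ∈ geomRow M j ↔ ∃ i ∈ Icc 1 M, (i : ℝ) * (M + 1) ^ j = x :=
  mem_image

lemma card_geomRow (M j : ℕ) : #(geomRow M j) = M := by
  rw [geomRow, card_image_of_injective _ fun i i' h =>
    Nat.cast_injective (mul_right_cancel₀ (by positivity) h), Nat.card_Icc, Nat.add_sub_cancel]

lemma pairwise_disjoint_geomRow (M : ℕ) : Pairwise (Disjoint on geomRow M) := by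
  intro j k hjk
  refine disjoint_left.2 fun x hxj hxk => hjk ?_
  obtain ⟨i, hi, rfl⟩ := mem_geomRow.1 hxj
  obtain ⟨i', hi', hii'⟩ := mem_geomRow.1 hxk
  rw [mem_Icc] at hi hi'
  refine (eq_of_mul_pow_eq_mul_pow (b := (M + 1 : ℝ)) ?_ ?_ ?_ ?_ ?_ hii').symm <;>
    norm_cast <;> omega

lemma card_geomGrid (M K : ℕ) : #(geomGrid M K) = K * M := by
  rw [geomGrid, card_biUnion ((pairwise_disjoint_geomRow M).set_pairwise _)]
  simp [card_geomRow]

lemma card_geomRow_add_le (M j : ℕ) : #(geomRow M j + geomRow M j) ≤ 2 * M := by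
  have hsub : geomRow M j + geomRow M j ⊆
      (Icc 2 (2 * M)).image fun a : ℕ => (a : ℝ) * (M + 1) ^ j := by
    intro x hx
    obtain ⟨y, hy, z, hz, rfl⟩ := mem_add.1 hx
    obtain ⟨i, hi, rfl⟩ := mem_geomRow.1 hy
    obtain ⟨i', hi', rfl⟩ := mem_geomRow.1 hz
    rw [mem_Icc] at hi hi'
    exact mem_image.2 ⟨i + i', mem_Icc.2 ⟨by omega, by omega⟩, by push_cast; ring⟩
  calc #(geomRow M j + geomRow M j) ≤ #(Icc 2 (2 * M)) :=
        (card_le_card hsub).trans card_image_le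
    _ ≤ 2 * M := by rw [Nat.card_Icc]; omega

lemma card_geomGrid_mul_le (M K : ℕ) : #(geomGrid M K * geomGrid M K) ≤ 2 * K * M ^ 2 := by
  have hsub : geomGrid M K * geomGrid M K ⊆
      (Icc 1 (M ^ 2) ×ˢ Icc 2 (2 * K)).image fun p => (p.1 : ℝ) * (M + 1) ^ p.2 := by
    intro x hx
    obtain ⟨y, hy, z, hz, rfl⟩ := mem_mul.1 hx
    obtain ⟨j, hj, hy⟩ := mem_biUnion.1 hy
    obtain ⟨j', hj', hz⟩ := mem_biUnion.1 hz
    obtain ⟨i, hi, rfl⟩ := mem_geomRow.1 hy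
    obtain ⟨i', hi', rfl⟩ := mem_geomRow.1 hz
    rw [mem_Icc] at hi hi' hj hj'
    refine mem_image.2 ⟨(i * i', j + j'),
      mem_product.2 ⟨mem_Icc.2 ⟨?_, ?_⟩, mem_Icc.2 ⟨?_, ?_⟩⟩, by push_cast; ring⟩
    · exact Nat.mul_le_mul hi.1 hi'.1
    · rw [sq]; exact Nat.mul_le_mul hi.2 hi'.2
    all_goals omega
  calc #(geomGrid M K * geomGrid M K) ≤ #(Icc 1 (M ^ 2) ×ˢ Icc 2 (2 * K)) :=
        (card_le_card hsub).trans card_image_le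
    _ ≤ 2 * K * M ^ 2 := by
      rw [card_product, Nat.card_Icc, Nat.card_Icc, Nat.add_sub_cancel, mul_comm]
      gcongr; omega

lemma add_pow_four_le_mul_max {a b n x y : ℕ} (ha : a ^ 4 ≤ n * x) (hb : b ^ 4 ≤ n * y) :
    (a + b) ^ 4 ≤ 16 * n * max x y := by
  rcases le_total a b with hab | hba
  · calc (a + b) ^ 4 ≤ (2 * b) ^ 4 := by gcongr; omega
      _ = 16 * b ^ 4 := by ring
      _ ≤ 16 * n * max x y := by
        rw [mul_assoc]; gcongr; exact hb.trans (by gcongr; exact le_max_right _ _)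
  · calc (a + b) ^ 4 ≤ (2 * a) ^ 4 := by gcongr; omega
      _ = 16 * a ^ 4 := by ring
      _ ≤ 16 * n * max x y := by
        rw [mul_assoc]; gcongr; exact ha.trans (by gcongr; exact le_max_left _ _)

lemma pow_seven_le_mul_max_energy_of_union_eq_geomGrid (K : ℕ) {B C : Finset ℝ}
    (hBC : Disjoint B C) (hA : B ∪ C = geomGrid (K ^ 2) K) :
    K ^ 7 ≤ 32 * max E[B] Eₘ[C] := by
  have hB : #B ^ 4 ≤ 2 * K ^ 5 * E[B] := by
    have := card_pow_four_le_mul_addEnergy_of_subset_biUnion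
      ((pairwise_disjoint_geomRow (K ^ 2)).set_pairwise (Icc 1 K))
      (hA ▸ subset_union_left) fun j _ => card_geomRow_add_le (K ^ 2) j
    rw [Nat.card_Icc, Nat.add_sub_cancel] at this
    exact this.trans_eq (by ring)
  have hC : #C ^ 4 ≤ 2 * K ^ 5 * Eₘ[C] := by
    refine (card_pow_four_le_card_mul_mul_mulEnergy_of_subset (hA ▸ subset_union_right)).trans ?_
    gcongr
    exact (card_geomGrid_mul_le _ _).trans_eq (by ring)
  have hcard : #B + #C = K ^ 3 := by
    rw [← card_union_of_disjoint hBC, hA, card_geomGrid]; ring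
  rcases Nat.eq_zero_or_pos K with rfl | hK
  · simp
  refine Nat.le_of_mul_le_mul_left ?_ (pow_pos hK 5)
  calc K ^ 5 * K ^ 7 = (#B + #C) ^ 4 := by rw [hcard]; ring
    _ ≤ 16 * (2 * K ^ 5) * max E[B] Eₘ[C] := add_pow_four_le_mul_max hB hC
    _ = K ^ 5 * (32 * max E[B] Eₘ[C]) := by ring

/-- Theorem 1.2 (lower bound part): there exist arbitrarily large finite sets `A ⊆ ℝ`
such that every decomposition `A = B ∪ C` into disjoint parts satisfies
`max{E₊(B), E×(C)} ≥ c·|A|^(7/3)`. -/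
theorem low_energy_decomposition_lower_bound :
    ∃ c : ℝ, 0 < c ∧ ∀ N₀ : ℕ, ∃ A : Finset ℝ, N₀ ≤ A.card ∧
      ∀ B C : Finset ℝ, Disjoint B C → B ∪ C = A →
        c * (A.card : ℝ) ^ ((7 : ℝ) / 3) ≤ (max E[B, B] Eₘ[C, C] : ℝ) := by
  refine ⟨1 / 32, by norm_num, fun K => ⟨geomGrid (K ^ 2) K, ?_, fun B C hBC hA => ?_⟩⟩
  · rw [card_geomGrid, ← pow_succ']
    exact Nat.le_self_pow (by norm_num) K
  have hrpow : ((#(geomGrid (K ^ 2) K) : ℕ) : ℝ) ^ ((7 : ℝ) / 3) = (K : ℝ) ^ 7 := by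
    rw [card_geomGrid, ← pow_succ', Nat.cast_pow, ← Real.rpow_natCast, ← Real.rpow_mul
      (Nat.cast_nonneg K)]
    norm_num
  have key : (K : ℝ) ^ 7 ≤ 32 * max (E[B] : ℝ) (Eₘ[C] : ℝ) := by
    exact_mod_cast pow_seven_le_mul_max_energy_of_union_eq_geomGrid K hBC hA
  rw [hrpow]
  linarith
end

section
/- Let N be a positive integer and let A = {(2m−1)·2ⁿ : m, n positive integers with m ≤ N^(2/3) and n ≤ N^(1/3)} ⊆ ℕ. Then every subset B ⊆ A with |B| ≥ |A|/2 satisfies E×(B) ≥ N^(7/3)/2⁶. -/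
open Finset

/-- The set `{(2m−1)·2ⁿ : m, n ≥ 1, m ≤ N^(2/3), n ≤ N^(1/3)}`. -/
noncomputable def BWset (N : ℕ) : Finset ℕ :=
  ((Finset.Icc 1 N ×ˢ Finset.Icc 1 N).filter fun p =>
      (p.1 : ℝ) ≤ (N : ℝ) ^ ((2 : ℝ) / 3) ∧ (p.2 : ℝ) ≤ (N : ℝ) ^ ((1 : ℝ) / 3)).image
    fun p => (2 * p.1 - 1) * 2 ^ p.2

/-- Multiplicative energy `E×(B) = #{(b₁,b₂,b₃,b₄) ∈ B⁴ : b₁b₂ = b₃b₄}`. -/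
def mulE (B : Finset ℕ) : ℕ :=
  ((B ×ˢ B ×ˢ B ×ˢ B).filter fun x => x.1 * x.2.1 = x.2.2.1 * x.2.2.2).card

/-!
Let `a = ⌊N^(2/3)⌋` and `b = ⌊N^(1/3)⌋`. Odd part and `2`-adic valuation are unique, so `|A| = ab`,
while a product of two elements of `A` is determined by the unordered pair of their odd parts
and the total exponent of `2`, which lies in `[2, 2b]`; hence `|A·A| ≤ a(a+1)b`. The
Cauchy–Schwarz bound `|B|⁴ ≤ |B·B| E×(B)` with `|B| ≥ ab/2` then gives
`E×(B) ≥ (ab/2)⁴ / (a(a+1)b) ≈ N^(7/3)/16`. When `N < 27` the rounding losses in `a` and `b`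
are too large for this, and the trivial bound `E×(B) ≥ |B|²` suffices instead.
-/

open scoped Pointwise Combinatorics.Additive

lemma mulE_eq_mulEnergy (B : Finset ℕ) : mulE B = Eₘ[B] := by
  refine card_bij' (fun q _ => ((q.1, q.2.2.1), (q.2.1, q.2.2.2)))
    (fun q _ => (q.1.1, q.2.1, q.1.2, q.2.2)) ?_ ?_ (fun _ _ => rfl) (fun _ _ => rfl)
  · rintro ⟨b₁, b₂, b₃, b₄⟩ hq
    simp only [mem_filter, mem_product] at hq ⊢
    tauto
  · rintro ⟨⟨b₁, b₃⟩, b₂, b₄⟩ hq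
    simp only [mem_filter, mem_product] at hq ⊢
    tauto

lemma padicValNat_two_odd_mul_two_pow {m : ℕ} (hm : 1 ≤ m) (n : ℕ) :
    padicValNat 2 ((2 * m - 1) * 2 ^ n) = n := by
  have hodd : ¬ 2 ∣ 2 * m - 1 := by omega
  rw [padicValNat.mul (by omega) (by positivity), padicValNat.prime_pow,
    padicValNat.eq_zero_of_not_dvd hodd, zero_add]

lemma odd_mul_two_pow_injOn :
    Set.InjOn (fun p : ℕ × ℕ => (2 * p.1 - 1) * 2 ^ p.2) {p | 1 ≤ p.1} := by
  rintro ⟨m, n⟩ (hm : 1 ≤ m) ⟨m', n'⟩ (hm' : 1 ≤ m')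
    (h : (2 * m - 1) * 2 ^ n = (2 * m' - 1) * 2 ^ n')
  obtain rfl : n = n' := by
    rw [← padicValNat_two_odd_mul_two_pow hm n, h, padicValNat_two_odd_mul_two_pow hm' n']
  have : 2 * m - 1 = 2 * m' - 1 := Nat.eq_of_mul_eq_mul_right (by positivity) h
  exact Prod.ext (by omega) rfl

def oddMulTwoPow (a b : ℕ) : Finset ℕ :=
  (Icc 1 a ×ˢ Icc 1 b).image fun p => (2 * p.1 - 1) * 2 ^ p.2

lemma card_oddMulTwoPow (a b : ℕ) : #(oddMulTwoPow a b) = a * b := by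
  rw [oddMulTwoPow, card_image_of_injOn, card_product, Nat.card_Icc, Nat.card_Icc,
    Nat.add_sub_cancel, Nat.add_sub_cancel]
  exact odd_mul_two_pow_injOn.mono fun p hp => (mem_Icc.1 (mem_product.1 hp).1).1

lemma card_oddMulTwoPow_mul_self_le (a b : ℕ) :
    #(oddMulTwoPow a b * oddMulTwoPow a b) ≤ (a + 1).choose 2 * (2 * b) := by
  let oddProd : Sym2 ℕ → ℕ :=
    Sym2.lift ⟨fun m m' => (2 * m - 1) * (2 * m' - 1), fun _ _ => mul_comm _ _⟩
  have hsub : oddMulTwoPow a b * oddMulTwoPow a b ⊆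
      ((Icc 1 a).sym2 ×ˢ Icc 1 (2 * b)).image fun q => oddProd q.1 * 2 ^ q.2 := by
    simp only [oddMulTwoPow, subset_iff, mem_mul, mem_image, mem_product, mem_Icc]
    rintro _ ⟨_, ⟨⟨m, n⟩, hmn, rfl⟩, _, ⟨⟨m', n'⟩, hmn', rfl⟩, rfl⟩
    refine ⟨(s(m, m'), n + n'), ⟨?_, by omega⟩, ?_⟩
    · simp only [mk_mem_sym2_iff, mem_Icc]
      omega
    · simp only [oddProd, Sym2.lift_mk, pow_add]
      ring
  calc _ ≤ _ := card_le_card hsub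
    _ ≤ _ := card_image_le
    _ = _ := by simp only [card_product, card_sym2, Nat.card_Icc, Nat.add_sub_cancel]

lemma card_pow_four_le_mulE {a b : ℕ} {B : Finset ℕ} (hB : B ⊆ oddMulTwoPow a b) :
    (#B : ℝ) ^ 4 ≤ a * (a + 1) * b * mulE B := by
  have hBB : (#(B * B) : ℝ) ≤ a * (a + 1) * b := by
    have h := (card_le_card (mul_subset_mul hB hB)).trans (card_oddMulTwoPow_mul_self_le a b)
    have h' : (#(B * B) : ℝ) ≤ ((a + 1).choose 2 : ℕ) * (2 * b) := by exact_mod_cast h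
    rw [Nat.cast_choose_two] at h'
    push_cast at h'
    linarith
  rw [mulE_eq_mulEnergy]
  calc (#B : ℝ) ^ 4 = #B ^ 2 * #B ^ 2 := by ring
    _ ≤ (#(B * B) : ℝ) * (Eₘ[B] : ℕ) := by exact_mod_cast le_card_mul_mul_mulEnergy B B
    _ ≤ _ := by gcongr

lemma filter_Icc_natCast_le {N : ℕ} {x : ℝ} (hx : 0 ≤ x) (hxN : x ≤ N) :
    (Icc 1 N).filter (fun m : ℕ => (m : ℝ) ≤ x) = Icc 1 ⌊x⌋₊ := by
  have : ⌊x⌋₊ ≤ N := Nat.floor_le_of_le hxN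
  ext m
  simp only [mem_filter, mem_Icc, ← Nat.le_floor_iff hx]
  omega

lemma BWset_eq_oddMulTwoPow {N : ℕ} (hN : 0 < N) :
    BWset N = oddMulTwoPow ⌊((N : ℝ) ^ ((1 : ℝ) / 3)) ^ 2⌋₊ ⌊(N : ℝ) ^ ((1 : ℝ) / 3)⌋₊ := by
  have hN1 : (1 : ℝ) ≤ N := by exact_mod_cast hN
  have h23 : (N : ℝ) ^ ((2 : ℝ) / 3) = ((N : ℝ) ^ ((1 : ℝ) / 3)) ^ 2 := by
    rw [← Real.rpow_mul_natCast (by positivity)]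
    norm_num
  have hle : ∀ e : ℝ, e ≤ 1 → (N : ℝ) ^ e ≤ N := fun e he =>
    (Real.rpow_le_rpow_of_exponent_le hN1 he).trans_eq (Real.rpow_one _)
  rw [BWset, oddMulTwoPow, filter_product (fun m : ℕ => (m : ℝ) ≤ _) (fun n : ℕ => (n : ℝ) ≤ _),
    filter_Icc_natCast_le (by positivity) (hle _ (by norm_num)),
    filter_Icc_natCast_le (by positivity) (hle _ (by norm_num)), h23]

lemma succ_mul_succ_pow_three_le {a b : ℕ} (hb₁ : 1 ≤ b) (hb₂ : b ≤ 2) (hba : b ^ 2 ≤ a)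
    (hab : a < (b + 1) ^ 2) : (b + 1) * (a + 1) ^ 3 ≤ 16 * a ^ 2 * b ^ 2 := by
  interval_cases b <;> norm_num at hba hab <;> interval_cases a <;> norm_num

lemma pow_seven_le_of_lt_three {x E : ℝ} (hx : 1 ≤ x) (hx₃ : x < 3)
    (hE : ((⌊x ^ 2⌋₊ : ℝ) * ⌊x⌋₊ / 2) ^ 2 ≤ E) : x ^ 7 ≤ 2 ^ 6 * E := by
  set a := ⌊x ^ 2⌋₊
  set b := ⌊x⌋₊
  have hxb : x < b + 1 := Nat.lt_floor_add_one x
  have hxa : x ^ 2 < a + 1 := Nat.lt_floor_add_one _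
  have hb₁ : 1 ≤ b := Nat.le_floor (by simpa using hx)
  have hb₂ : b ≤ 2 := Nat.le_of_lt_succ ((Nat.floor_lt (by positivity)).2 (by norm_num; linarith))
  have hba : b ^ 2 ≤ a := Nat.le_floor (by push_cast; gcongr; exact Nat.floor_le (by positivity))
  have hab : a < (b + 1) ^ 2 := by
    have : (a : ℝ) < (b + 1) ^ 2 := by
      calc (a : ℝ) ≤ x ^ 2 := Nat.floor_le (by positivity)
        _ < (b + 1) ^ 2 := by gcongr
    exact_mod_cast this
  calc x ^ 7 = x * (x ^ 2) ^ 3 := by ring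
    _ ≤ ((b : ℝ) + 1) * (a + 1) ^ 3 := by gcongr
    _ ≤ 16 * (a : ℝ) ^ 2 * b ^ 2 := by exact_mod_cast succ_mul_succ_pow_three_le hb₁ hb₂ hba hab
    _ = 2 ^ 6 * ((a : ℝ) * b / 2) ^ 2 := by ring
    _ ≤ 2 ^ 6 * E := by gcongr

lemma pow_seven_le_of_three_le {x E : ℝ} (hx : 3 ≤ x)
    (hE : ((⌊x ^ 2⌋₊ : ℝ) * ⌊x⌋₊ / 2) ^ 4 ≤ ⌊x ^ 2⌋₊ * (⌊x ^ 2⌋₊ + 1) * ⌊x⌋₊ * E) :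
    x ^ 7 ≤ 2 ^ 6 * E := by
  have ha : (9 : ℝ) ≤ ⌊x ^ 2⌋₊ := by exact_mod_cast Nat.le_floor (n := 9) (by push_cast; nlinarith)
  have hb : (3 : ℝ) ≤ ⌊x⌋₊ := by exact_mod_cast Nat.le_floor (n := 3) (by push_cast; exact hx)
  have hxa : x ^ 2 ≤ ⌊x ^ 2⌋₊ + 1 := (Nat.lt_floor_add_one _).le
  have hxb : x ≤ ⌊x⌋₊ + 1 := (Nat.lt_floor_add_one _).le
  set a : ℝ := (⌊x ^ 2⌋₊ : ℝ)
  set b : ℝ := (⌊x⌋₊ : ℝ)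
  -- `(1 + 1/a) (1 + 1/b) ≤ (10/9) (4/3) = 40/27`, and `(40/27)³ < 4`
  have hab : (a + 1) * (b + 1) ≤ 40 / 27 * (a * b) := by
    nlinarith [mul_nonneg (sub_nonneg.2 ha) (sub_nonneg.2 hb)]
  have hM : 0 < a * (a + 1) * b := by positivity
  refine le_of_mul_le_mul_right ?_ hM
  calc x ^ 7 * (a * (a + 1) * b) = (x ^ 2) ^ 2 * x ^ 3 * (a * (a + 1) * b) := by ring
    _ ≤ (a + 1) ^ 2 * (b + 1) ^ 3 * (a * (a + 1) * b) := by gcongr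
    _ = ((a + 1) * (b + 1)) ^ 3 * (a * b) := by ring
    _ ≤ (40 / 27 * (a * b)) ^ 3 * (a * b) := by gcongr
    _ ≤ 2 ^ 6 * (a * b / 2) ^ 4 := by ring_nf; gcongr; norm_num
    _ ≤ 2 ^ 6 * E * (a * (a + 1) * b) := by linarith

theorem mul_energy_lower_bound (N : ℕ) (hN : 0 < N) (B : Finset ℕ)
    (hBA : B ⊆ BWset N) (hB : ((BWset N).card : ℝ) / 2 ≤ B.card) :
    (N : ℝ) ^ ((7 : ℝ) / 3) / 2 ^ 6 ≤ (mulE B : ℝ) := by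
  set x := (N : ℝ) ^ ((1 : ℝ) / 3)
  have hx : 1 ≤ x := Real.one_le_rpow (by exact_mod_cast hN) (by norm_num)
  have h73 : (N : ℝ) ^ ((7 : ℝ) / 3) = x ^ 7 := by
    rw [← Real.rpow_mul_natCast (by positivity)]
    norm_num
  rw [BWset_eq_oddMulTwoPow hN] at hBA hB
  rw [card_oddMulTwoPow, Nat.cast_mul] at hB
  rw [h73, div_le_iff₀' (by norm_num)]
  rcases lt_or_ge x 3 with hx₃ | hx₃
  · exact pow_seven_le_of_lt_three hx hx₃ <| (pow_le_pow_left₀ (by positivity) hB 2).trans <| by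
      rw [mulE_eq_mulEnergy]
      exact_mod_cast le_mulEnergy_self
  · exact pow_seven_le_of_three_le hx₃ <|
      (pow_le_pow_left₀ (by positivity) hB 4).trans (card_pow_four_le_mulE hBA)
end

section
/- There exist a constant c > 0 and a natural number N₀ such that for every integer N ≥ N₀ the following holds: with A = {(2m−1)·2ⁿ : m, n positive integers with m ≤ N^(2/3) and n ≤ N^(1/3)} ⊆ ℕ, every subset B ⊆ A with |B| ≥ |A|/2 satisfies E₊(B) ≥ c·N^(7/3). -/
open Finset
open scoped Pointwise

/-- Additive energy `E₊(B) = #{(b₁,b₂,b₃,b₄) ∈ B⁴ : b₁+b₂ = b₃+b₄}`. -/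
def addE (B : Finset ℕ) : ℕ :=
  ((B ×ˢ B ×ˢ B ×ˢ B).filter fun x => x.1 + x.2.1 = x.2.2.1 + x.2.2.2).card

lemma val_aux {m : ℕ} (n : ℕ) (hm : 1 ≤ m) : padicValNat 2 ((2 * m - 1) * 2 ^ n) = n := by
  rw [padicValNat.mul (by omega) (pow_ne_zero _ two_ne_zero),
    padicValNat.eq_zero_of_not_dvd (by omega), padicValNat.prime_pow, zero_add]

lemma f_inj {m n m' n' : ℕ} (hm : 1 ≤ m) (hm' : 1 ≤ m')
    (h : (2*m-1)*2^n = (2*m'-1)*2^n') : m = m' ∧ n = n' := by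
  have hn : n = n' := by
    have := congrArg (padicValNat 2) h
    rwa [val_aux n hm, val_aux n' hm'] at this
  subst hn
  have := Nat.eq_of_mul_eq_mul_right (Nat.two_pow_pos n) h
  exact ⟨by omega, rfl⟩

lemma addE_eq (B : Finset ℕ) : addE B = Finset.addEnergy B B := by
  unfold addE Finset.addEnergy
  apply Finset.card_equiv
    ⟨fun x => ((x.1, x.2.2.1), (x.2.1, x.2.2.2)),
     fun y => (y.1.1, y.2.1, y.1.2, y.2.2), fun x => rfl, fun y => rfl⟩
  rintro ⟨a,b,c,d⟩
  simp only [mem_filter, mem_product, Equiv.coe_fn_mk]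
  tauto

lemma BWset_eq (N : ℕ) (hN : 1 ≤ N) :
    BWset N = ((Finset.Icc 1 ⌊(N:ℝ)^((2:ℝ)/3)⌋₊ ×ˢ Finset.Icc 1 ⌊(N:ℝ)^((1:ℝ)/3)⌋₊).image
      fun p => (2 * p.1 - 1) * 2 ^ p.2) := by
  have h1 : (0:ℝ) ≤ (N:ℝ)^((2:ℝ)/3) := Real.rpow_nonneg (by positivity) _
  have h2 : (0:ℝ) ≤ (N:ℝ)^((1:ℝ)/3) := Real.rpow_nonneg (by positivity) _
  have hN1 : (1:ℝ) ≤ (N:ℝ) := by exact_mod_cast hN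
  have hM : ⌊(N:ℝ)^((2:ℝ)/3)⌋₊ ≤ N := by
    have h : (N:ℝ)^((2:ℝ)/3) ≤ (N:ℝ)^(1:ℝ) :=
      Real.rpow_le_rpow_of_exponent_le hN1 (by norm_num)
    calc ⌊(N:ℝ)^((2:ℝ)/3)⌋₊ ≤ ⌊(N:ℝ)^(1:ℝ)⌋₊ := Nat.floor_le_floor h
      _ = N := by rw [Real.rpow_one, Nat.floor_natCast]
  have hK : ⌊(N:ℝ)^((1:ℝ)/3)⌋₊ ≤ N := by
    have h : (N:ℝ)^((1:ℝ)/3) ≤ (N:ℝ)^(1:ℝ) :=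
      Real.rpow_le_rpow_of_exponent_le hN1 (by norm_num)
    calc ⌊(N:ℝ)^((1:ℝ)/3)⌋₊ ≤ ⌊(N:ℝ)^(1:ℝ)⌋₊ := Nat.floor_le_floor h
      _ = N := by rw [Real.rpow_one, Nat.floor_natCast]
  unfold BWset
  congr 1
  ext ⟨a, b⟩
  simp only [mem_filter, mem_product, mem_Icc]
  constructor
  · rintro ⟨⟨⟨ha1, _⟩, hb1, _⟩, hA, hB⟩
    exact ⟨⟨ha1, Nat.le_floor hA⟩, hb1, Nat.le_floor hB⟩
  · rintro ⟨⟨ha1, ha2⟩, hb1, hb2⟩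
    exact ⟨⟨⟨ha1, ha2.trans hM⟩, hb1, hb2.trans hK⟩,
      (Nat.le_floor_iff h1).mp ha2, (Nat.le_floor_iff h2).mp hb2⟩

lemma sum_energy_le {B : Finset ℕ} {I : Finset ℕ} {f : ℕ → Finset ℕ}
    (hsub : ∀ n ∈ I, f n ⊆ B)
    (hdisj : ∀ m ∈ I, ∀ n ∈ I, m ≠ n → Disjoint (f m) (f n)) :
    ∑ n ∈ I, Finset.addEnergy (f n) (f n) ≤ Finset.addEnergy B B := by
  classical
  unfold Finset.addEnergy
  rw [← Finset.card_biUnion]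
  · apply Finset.card_le_card
    intro x hx
    simp only [Finset.mem_biUnion] at hx
    obtain ⟨n, hn, hx⟩ := hx
    simp only [Finset.mem_filter, Finset.mem_product] at hx ⊢
    exact ⟨⟨⟨hsub n hn hx.1.1.1, hsub n hn hx.1.1.2⟩, hsub n hn hx.1.2.1, hsub n hn hx.1.2.2⟩,
      hx.2⟩
  · intro m hm n hn hmn
    simp only [Finset.disjoint_left, Finset.mem_filter, Finset.mem_product]
    rintro x ⟨⟨⟨h1, -⟩, -⟩, -⟩ ⟨⟨⟨h1', -⟩, -⟩, -⟩
    exact (Finset.disjoint_left.mp (hdisj m hm n hn hmn)) h1 h1'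

lemma row_card_bound {M n : ℕ} {S : Finset ℕ}
    (hS : S ⊆ (Finset.Icc 1 M).image fun m => (2*m-1)*2^n) :
    (S + S).card ≤ 2 * M := by
  have h : S + S ⊆ (Finset.Icc 1 (2*M)).image fun j => j * 2^(n+1) := by
    intro x hx
    rw [Finset.mem_add] at hx
    obtain ⟨a, ha, b, hb, rfl⟩ := hx
    obtain ⟨m1, hm1, rfl⟩ := Finset.mem_image.mp (hS ha)
    obtain ⟨m2, hm2, rfl⟩ := Finset.mem_image.mp (hS hb)
    simp only [Finset.mem_Icc] at hm1 hm2
    refine Finset.mem_image.mpr ⟨m1 + m2 - 1, ?_, ?_⟩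
    · simp only [Finset.mem_Icc]; omega
    · obtain ⟨a', rfl⟩ : ∃ a', m1 = a' + 1 := ⟨m1 - 1, by omega⟩
      obtain ⟨b', rfl⟩ : ∃ b', m2 = b' + 1 := ⟨m2 - 1, by omega⟩
      have e1 : 2 * (a' + 1) - 1 = 2 * a' + 1 := by omega
      have e2 : 2 * (b' + 1) - 1 = 2 * b' + 1 := by omega
      have e3 : (a' + 1) + (b' + 1) - 1 = a' + b' + 1 := by omega
      rw [e1, e2, e3, pow_succ]; ring
  calc (S+S).card ≤ ((Finset.Icc 1 (2*M)).image fun j => j * 2^(n+1)).card :=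
        Finset.card_le_card h
    _ ≤ (Finset.Icc 1 (2*M)).card := Finset.card_image_le
    _ = 2*M := by rw [Nat.card_Icc]; omega

lemma sum_pow_four (I : Finset ℕ) (x : ℕ → ℕ) :
    (∑ n ∈ I, x n) ^ 4 ≤ I.card ^ 3 * ∑ n ∈ I, x n ^ 4 := by
  have h1 : (∑ n ∈ I, x n) ^ 2 ≤ I.card * ∑ n ∈ I, x n ^ 2 := by
    simpa using sum_mul_sq_le_sq_mul_sq (R := ℕ) I 1 x
  have h2 : (∑ n ∈ I, x n ^ 2) ^ 2 ≤ I.card * ∑ n ∈ I, x n ^ 4 := by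
    have := sum_mul_sq_le_sq_mul_sq (R := ℕ) I 1 (fun n => x n ^ 2)
    simpa [← pow_mul] using this
  calc (∑ n ∈ I, x n)^4 = ((∑ n ∈ I, x n)^2)^2 := by ring
    _ ≤ (I.card * ∑ n ∈ I, x n ^ 2)^2 := Nat.pow_le_pow_left h1 2
    _ = I.card^2 * (∑ n ∈ I, x n ^ 2)^2 := by ring
    _ ≤ I.card^2 * (I.card * ∑ n ∈ I, x n^4) := Nat.mul_le_mul_left _ h2
    _ = I.card^3 * ∑ n ∈ I, x n^4 := by ring

theorem add_energy_lower_bound :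
    ∃ c : ℝ, 0 < c ∧ ∃ N₀ : ℕ, ∀ N : ℕ, N₀ ≤ N →
      ∀ B : Finset ℕ, B ⊆ BWset N → ((BWset N).card : ℝ) / 2 ≤ B.card →
        c * (N : ℝ) ^ ((7 : ℝ) / 3) ≤ (addE B : ℝ) := by
  refine ⟨1/512, by norm_num, 1, fun N hN B hBA hBcard => ?_⟩
  set M := ⌊(N:ℝ)^((2:ℝ)/3)⌋₊ with hMdef
  set K := ⌊(N:ℝ)^((1:ℝ)/3)⌋₊ with hKdef
  have hN1 : (1:ℝ) ≤ (N:ℝ) := by exact_mod_cast hN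
  have hrM : (1:ℝ) ≤ (N:ℝ)^((2:ℝ)/3) := by
    calc (1:ℝ) = (1:ℝ)^((2:ℝ)/3) := (Real.one_rpow _).symm
    _ ≤ (N:ℝ)^((2:ℝ)/3) := Real.rpow_le_rpow (by norm_num) hN1 (by norm_num)
  have hrK : (1:ℝ) ≤ (N:ℝ)^((1:ℝ)/3) := by
    calc (1:ℝ) = (1:ℝ)^((1:ℝ)/3) := (Real.one_rpow _).symm
    _ ≤ (N:ℝ)^((1:ℝ)/3) := Real.rpow_le_rpow (by norm_num) hN1 (by norm_num)
  have hM1 : 1 ≤ M := Nat.le_floor (by exact_mod_cast hrM)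
  have hK1 : 1 ≤ K := Nat.le_floor (by exact_mod_cast hrK)
  have hA := BWset_eq N hN
  -- cardinality of BWset
  have hcardA : (BWset N).card = M * K := by
    rw [hA, Finset.card_image_of_injOn, Finset.card_product, Nat.card_Icc, Nat.card_Icc]
    · simp [hMdef, hKdef]
    · rintro ⟨m, n⟩ hmn ⟨m', n'⟩ hmn' h
      simp only [Finset.mem_coe, Finset.mem_product, Finset.mem_Icc] at hmn hmn'
      have := f_inj hmn.1.1 hmn'.1.1 h
      simp only [Prod.mk.injEq]
      exact ⟨this.1, this.2⟩
  -- rows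
  set Bn : ℕ → Finset ℕ := fun n => B.filter (fun b => padicValNat 2 b = n) with hBn
  have hval : ∀ b ∈ B, padicValNat 2 b ∈ Finset.Icc 1 K := by
    intro b hb
    have hb' := hBA hb
    rw [hA] at hb'
    obtain ⟨⟨m, n⟩, hmn, rfl⟩ := Finset.mem_image.mp hb'
    simp only [Finset.mem_product, Finset.mem_Icc] at hmn
    rw [val_aux n hmn.1.1]
    simp only [Finset.mem_Icc]
    exact hmn.2
  have hsum : ∑ n ∈ Finset.Icc 1 K, (Bn n).card = B.card :=
    (Finset.card_eq_sum_card_fiberwise hval).symm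
  have hrow_sub : ∀ n, Bn n ⊆ (Finset.Icc 1 M).image fun m => (2*m-1)*2^n := by
    intro n b hb
    rw [hBn, Finset.mem_filter] at hb
    obtain ⟨hbB, hbv⟩ := hb
    have hb' := hBA hbB
    rw [hA] at hb'
    obtain ⟨⟨m, n'⟩, hmn, rfl⟩ := Finset.mem_image.mp hb'
    simp only [Finset.mem_product, Finset.mem_Icc] at hmn
    have : n' = n := by rw [val_aux n' hmn.1.1] at hbv; exact hbv
    subst this
    exact Finset.mem_image.mpr ⟨m, Finset.mem_Icc.mpr hmn.1, rfl⟩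
  -- per-row energy
  have hrow_energy : ∀ n, (Bn n).card ^ 4 ≤ 2 * M * Finset.addEnergy (Bn n) (Bn n) := by
    intro n
    have h1 := Finset.le_card_add_mul_addEnergy (Bn n) (Bn n)
    have h2 := row_card_bound (hrow_sub n)
    calc (Bn n).card ^ 4 = (Bn n).card ^ 2 * (Bn n).card ^ 2 := by ring
      _ ≤ (Bn n + Bn n).card * Finset.addEnergy (Bn n) (Bn n) := h1
      _ ≤ 2 * M * Finset.addEnergy (Bn n) (Bn n) :=
          Nat.mul_le_mul_right _ h2
  -- superadditivity
  have hsup : ∑ n ∈ Finset.Icc 1 K, Finset.addEnergy (Bn n) (Bn n) ≤ addE B := by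
    rw [addE_eq]
    apply sum_energy_le
    · intro n _; exact Finset.filter_subset _ _
    · intro m _ n _ hmn
      rw [Finset.disjoint_left]
      intro a ha ha'
      rw [hBn, Finset.mem_filter] at ha ha'
      exact hmn (ha.2.symm.trans ha'.2)
  -- main chain in ℕ
  have hB2 : M * K ≤ 2 * B.card := by
    rw [div_le_iff₀ (by norm_num), hcardA] at hBcard
    have : M * K ≤ B.card * 2 := by exact_mod_cast hBcard
    omega
  have hKcard : (Finset.Icc 1 K).card = K := by rw [Nat.card_Icc]; omega
  have hchain : (M * K) ^ 4 ≤ 32 * (M * K ^ 3) * addE B := by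
    calc (M * K) ^ 4 ≤ (2 * B.card) ^ 4 := Nat.pow_le_pow_left hB2 4
      _ = 16 * B.card ^ 4 := by ring
      _ = 16 * (∑ n ∈ Finset.Icc 1 K, (Bn n).card) ^ 4 := by rw [hsum]
      _ ≤ 16 * (K ^ 3 * ∑ n ∈ Finset.Icc 1 K, (Bn n).card ^ 4) := by
          have := sum_pow_four (Finset.Icc 1 K) (fun n => (Bn n).card)
          rw [hKcard] at this
          exact Nat.mul_le_mul_left _ this
      _ ≤ 16 * (K ^ 3 * ∑ n ∈ Finset.Icc 1 K, 2 * M * Finset.addEnergy (Bn n) (Bn n)) := by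
          refine Nat.mul_le_mul_left _ (Nat.mul_le_mul_left _ (Finset.sum_le_sum ?_))
          intro n _; exact hrow_energy n
      _ = 32 * (M * K ^ 3) * ∑ n ∈ Finset.Icc 1 K, Finset.addEnergy (Bn n) (Bn n) := by
          rw [← Finset.mul_sum]; ring
      _ ≤ 32 * (M * K ^ 3) * addE B := Nat.mul_le_mul_left _ hsup
  have hkey : M ^ 3 * K ≤ 32 * addE B := by
    have hpos : 0 < M * K ^ 3 := by positivity
    have : (M ^ 3 * K) * (M * K ^ 3) ≤ (32 * addE B) * (M * K ^ 3) := by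
      calc (M ^ 3 * K) * (M * K ^ 3) = (M * K) ^ 4 := by ring
        _ ≤ 32 * (M * K ^ 3) * addE B := hchain
        _ = (32 * addE B) * (M * K ^ 3) := by ring
    exact Nat.le_of_mul_le_mul_right this hpos
  -- to reals
  have hMub : (N:ℝ)^((2:ℝ)/3) ≤ 2 * M := by
    have := Nat.lt_floor_add_one ((N:ℝ)^((2:ℝ)/3))
    have hM1' : (1:ℝ) ≤ (M:ℝ) := by exact_mod_cast hM1
    rw [← hMdef] at this
    nlinarith
  have hKub : (N:ℝ)^((1:ℝ)/3) ≤ 2 * K := by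
    have := Nat.lt_floor_add_one ((N:ℝ)^((1:ℝ)/3))
    have hK1' : (1:ℝ) ≤ (K:ℝ) := by exact_mod_cast hK1
    rw [← hKdef] at this
    nlinarith
  have hN0 : (0:ℝ) < N := by linarith
  have hsplit : (N:ℝ)^((7:ℝ)/3)
      = (N:ℝ)^((2:ℝ)/3) * (N:ℝ)^((2:ℝ)/3) * (N:ℝ)^((2:ℝ)/3) * (N:ℝ)^((1:ℝ)/3) := by
    rw [← Real.rpow_add hN0, ← Real.rpow_add hN0, ← Real.rpow_add hN0]
    norm_num
  have hfinal : (N:ℝ)^((7:ℝ)/3) ≤ 512 * addE B := by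
    have hMpos : (0:ℝ) ≤ (M:ℝ) := by positivity
    have hKpos : (0:ℝ) ≤ (K:ℝ) := by positivity
    have hM0 : (0:ℝ) ≤ (N:ℝ)^((2:ℝ)/3) := by positivity
    have hK0 : (0:ℝ) ≤ (N:ℝ)^((1:ℝ)/3) := by positivity
    have hkey' : (M:ℝ) ^ 3 * K ≤ 32 * addE B := by exact_mod_cast hkey
    calc (N:ℝ)^((7:ℝ)/3)
        = (N:ℝ)^((2:ℝ)/3) * (N:ℝ)^((2:ℝ)/3) * (N:ℝ)^((2:ℝ)/3) * (N:ℝ)^((1:ℝ)/3) := hsplit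
      _ ≤ (2*M) * (2*M) * (2*M) * (2*K) := by
          apply mul_le_mul (mul_le_mul (mul_le_mul hMub hMub hM0 (by positivity))
            hMub hM0 (by positivity)) hKub hK0 (by positivity)
      _ = 16 * ((M:ℝ)^3 * K) := by ring
      _ ≤ 16 * (32 * addE B) := by linarith
      _ = 512 * addE B := by ring
  linarith
end

section
/- Let A and B be non-empty finite subsets of an abelian group. Then |A+A| ≤ |A+B|²/|B|. -/
open Finset Pointwise

/-- Lemma 3.2 (a consequence of Plünnecke's inequality):
for non-empty finite subsets `A`, `B` of an abelian group, `|A+A| ≤ |A+B|²/|B|`. -/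
theorem card_add_self_le (G : Type*) [AddCommGroup G] [DecidableEq G]
    (A B : Finset G) (hA : A.Nonempty) (hB : B.Nonempty) :
    ((A + A).card : ℝ) ≤ ((A + B).card : ℝ) ^ 2 / (B.card : ℝ) := by
  rw [le_div_iff₀ (by exact_mod_cast hB.card_pos)]
  have h := Finset.ruzsa_triangle_inequality_add_add_add A B A
  have : (B + A) = (A + B) := add_comm A B ▸ rfl
  rw [this] at h
  calc ((A + A).card : ℝ) * B.card = ((A + A).card * B.card : ℕ) := by push_cast; ring
    _ ≤ ((A + B).card * (A + B).card : ℕ) := by exact_mod_cast h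
    _ = ((A + B).card : ℝ) ^ 2 := by push_cast; ring
end
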